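/- arXiv:2411.03066 — 4 statements merged into one kernel-verified Lean document; each statement's English description precedes it below -/
import Mathlib

section
/- There is no surely-equivalent configuration pair in the run of a minimal witness. That is, if ρ_min = c₀τ₀c₁τ₁…c_L is the run of a minimal-length witness distinguishing two non-equivalent dwROCAs A₁ and A₂, then no configuration pair c_i = (χ_i, ψ_i) on this run satisfies both χ_i ≡_K ψ_i and dist(χ_i) = dist(ψ_i) = ∞. -/
/-- A deterministic weighted real-time one-counter automaton (dwROCA) over
alphabet `A` and field `S`.  `next q b a`, `upd q b a`, `wt q b a` give the
target state, counter update and (nonzero) weight of the unique transition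
from state `q` reading letter `a` with counter-status `b` (`true` = counter is
zero). -/
structure DWROCA (A : Type) (S : Type) [Field S] where
  Q : Type
  fin : Fintype Q
  q0 : Q
  s0 : S
  s0_ne : s0 ≠ 0
  next : Q → Bool → A → Q
  upd : Q → Bool → A → ℤ
  wt : Q → Bool → A → S
  upd_mem : ∀ q b a, upd q b a ∈ ({-1, 0, 1} : Set ℤ)
  no_dec_on_zero : ∀ q a, upd q true a ≠ -1
  wt_ne : ∀ q b a, wt q b a ≠ 0

attribute [instance] DWROCA.fin

/-- Configurations: a state, a counter value and a weight. -/
abbrev DWROCA.Cfg {A S : Type} [Field S] (M : DWROCA A S) : Type := M.Q × ℕ × S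

variable {A S : Type} [Field S]

/-- One step of a dwROCA on a configuration. -/
def DWROCA.step (M : DWROCA A S) (c : M.Cfg) (x : A) : M.Cfg :=
  (M.next c.1 (decide (c.2.1 = 0)) x,
   ((c.2.1 : ℤ) + M.upd c.1 (decide (c.2.1 = 0)) x).toNat,
   c.2.2 * M.wt c.1 (decide (c.2.1 = 0)) x)

/-- The run of a dwROCA on a word from a configuration. -/
def DWROCA.run (M : DWROCA A S) (c : M.Cfg) (w : List A) : M.Cfg :=
  w.foldl M.step c

/-- `f(w, c)`: the value assigned to the word `w` by the configuration `c`. -/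
def DWROCA.val (M : DWROCA A S) (c : M.Cfg) (w : List A) : S :=
  (M.run c w).2.2

/-- The initial configuration. -/
def DWROCA.init (M : DWROCA A S) : M.Cfg := (M.q0, 0, M.s0)

/-- The function `f_A : Σ* → S` computed by a dwROCA. -/
def DWROCA.f (M : DWROCA A S) (w : List A) : S := M.val M.init w

/-- One step of the underlying uninitialised weighted automaton `uwa(M)`:
the counter is ignored (nonzero tests are always taken).  Its configurations
are pairs (state, weight). -/
def DWROCA.ustep (M : DWROCA A S) (c : M.Q × S) (x : A) : M.Q × S :=
  (M.next c.1 false x, c.2 * M.wt c.1 false x)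

/-- The value assigned to a word by a configuration of `uwa(M)`. -/
def DWROCA.uval (M : DWROCA A S) (c : M.Q × S) (w : List A) : S :=
  (w.foldl M.ustep c).2

/-- `k`-equivalence of configurations of two dwROCAs. -/
def kEquiv (M N : DWROCA A S) (c : M.Cfg) (d : N.Cfg) (k : ℕ) : Prop :=
  ∀ w : List A, w.length ≤ k → M.val c w = N.val d w

/-- `k`-equivalence of a configuration of `M` with a configuration of the
underlying weighted automaton `uwa(N)`. -/
def kEquivU (M N : DWROCA A S) (c : M.Cfg) (d : N.Q × S) (k : ℕ) : Prop :=
  ∀ w : List A, w.length ≤ k → M.val c w = N.uval d w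

/-- Membership in `NWA` (relative to the pair `A₁`, `A₂`): a configuration of
`M` (where `M` is `A₁` or `A₂`) not `K`-equivalent to any configuration of
`uwa(A₁) ∪ uwa(A₂)`. -/
def inNWA (A₁ A₂ M : DWROCA A S) (c : M.Cfg) (K : ℕ) : Prop :=
  (∀ d : A₁.Q × S, ¬ kEquivU M A₁ c d K) ∧ (∀ d : A₂.Q × S, ¬ kEquivU M A₂ c d K)

/-- `dist(c)`: least length of a word taking `c` into `NWA` (`⊤` if none). -/
noncomputable def distNWA (A₁ A₂ M : DWROCA A S) (c : M.Cfg) (K : ℕ) : ℕ∞ :=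
  sInf {n : ℕ∞ | ∃ w : List A, (w.length : ℕ∞) = n ∧ inNWA A₁ A₂ M (M.run c w) K}

/-- A configuration pair is surely-equivalent if the two configurations are
`K`-equivalent and both have infinite distance to `NWA`. -/
def surelyEq (A₁ A₂ : DWROCA A S) (c : A₁.Cfg) (d : A₂.Cfg) (K : ℕ) : Prop :=
  kEquiv A₁ A₂ c d K ∧ distNWA A₁ A₂ A₁ c K = ⊤ ∧ distNWA A₁ A₂ A₂ d K = ⊤

/-- A configuration pair is surely-nonequivalent if the two configurations are
not `K`-equivalent or have different distances to `NWA`. -/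
def surelyNonEq (A₁ A₂ : DWROCA A S) (c : A₁.Cfg) (d : A₂.Cfg) (K : ℕ) : Prop :=
  ¬ kEquiv A₁ A₂ c d K ∨ distNWA A₁ A₂ A₁ c K ≠ distNWA A₁ A₂ A₂ d K

/-- A configuration pair is unresolved if the configurations are `K`-equivalent
and have equal finite distances to `NWA`. -/
def unresolved (A₁ A₂ : DWROCA A S) (c : A₁.Cfg) (d : A₂.Cfg) (K : ℕ) : Prop :=
  kEquiv A₁ A₂ c d K ∧ distNWA A₁ A₂ A₁ c K = distNWA A₁ A₂ A₂ d K ∧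
    distNWA A₁ A₂ A₁ c K ≠ ⊤

/-- `w` is a minimal-length witness distinguishing `A₁` and `A₂`. -/
def IsMinWitness (A₁ A₂ : DWROCA A S) (w : List A) : Prop :=
  A₁.f w ≠ A₂.f w ∧ ∀ v : List A, A₁.f v ≠ A₂.f v → w.length ≤ v.length

/-- The `i`-th configuration pair `c_i` of the run of `w` from the initial
configuration pair. -/
def pairAt (A₁ A₂ : DWROCA A S) (w : List A) (i : ℕ) : A₁.Cfg × A₂.Cfg :=
  (A₁.run A₁.init (w.take i), A₂.run A₂.init (w.take i))

/-- Applying a sequence of transition pairs (determined, by determinism, by a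
word) to a configuration pair. -/
def runPair (A₁ A₂ : DWROCA A S) (c : A₁.Cfg × A₂.Cfg) (w : List A) :
    A₁.Cfg × A₂.Cfg :=
  (A₁.run c.1 w, A₂.run c.2 w)

/-- A configuration pair lies in the belt of slope `α/β` and thickness `d`. -/
def inBelt (α β d : ℕ) {A₁ A₂ : DWROCA A S} (c : A₁.Cfg × A₂.Cfg) : Prop :=
  |(α : ℤ) * (c.1.2.1 : ℤ) - (β : ℤ) * (c.2.2.1 : ℤ)| ≤ (d : ℤ)

/-- Two configuration pairs are `(α/β)`-related: same state pairs and same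
value of `α·m - β·n`. -/
def abRelated (α β : ℕ) {A₁ A₂ : DWROCA A S} (c c' : A₁.Cfg × A₂.Cfg) : Prop :=
  c.1.1 = c'.1.1 ∧ c.2.1 = c'.2.1 ∧
    (α : ℤ) * (c.1.2.1 : ℤ) - (β : ℤ) * (c.2.2.1 : ℤ) =
      (α : ℤ) * (c'.1.2.1 : ℤ) - (β : ℤ) * (c'.2.2.1 : ℤ)

/-! ### Auxiliary development -/

lemma stab_exists {Q : Type} [Fintype Q] [Nonempty Q] (r : ℕ → Q → Q → Prop)
    (hE : ∀ k, Equivalence (r k)) (hmono : ∀ k q q', r (k+1) q q' → r k q q') :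
    ∃ k < Fintype.card Q, ∀ q q', r k q q' ↔ r (k+1) q q' := by
  classical
  by_contra h
  push_neg at h
  set s : ℕ → Setoid Q := fun k => ⟨r k, hE k⟩ with hs
  haveI inst : ∀ k, Fintype (Quotient (s k)) :=
    fun k => @Quotient.fintype Q _ (s k) (fun a b => Classical.dec _)
  haveI : ∀ k, Nonempty (Quotient (s k)) :=
    fun k => ⟨Quotient.mk (s k) (Classical.arbitrary Q)⟩
  have key : ∀ k, k ≤ Fintype.card Q → k + 1 ≤ Fintype.card (Quotient (s k)) := by
    intro k
    induction k with
    | zero => intro _; exact Fintype.card_pos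
    | succ k ih =>
      intro hk
      have hk' : k < Fintype.card Q := hk
      have hcard : k + 1 ≤ Fintype.card (Quotient (s k)) := ih (le_of_lt hk')
      obtain ⟨q, q', hqq'⟩ := h k hk'
      have h1 : r k q q' ∧ ¬ r (k+1) q q' := by
        rcases hqq' with h' | h'
        · exact h'
        · exact absurd (hmono k q q' h'.2) h'.1
      let φ : Quotient (s (k+1)) → Quotient (s k) :=
        Quotient.lift (fun q => Quotient.mk (s k) q)
          (fun a b hab => Quotient.sound (hmono k a b hab))
      have hsurj : Function.Surjective φ := by
        intro x
        induction x using Quotient.ind with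
        | _ q => exact ⟨Quotient.mk (s (k+1)) q, rfl⟩
      have hninj : ¬ Function.Injective φ := by
        intro hinj
        have : Quotient.mk (s (k+1)) q = Quotient.mk (s (k+1)) q' := by
          apply hinj
          exact Quotient.sound h1.1
        exact h1.2 (Quotient.exact this)
      have := Fintype.card_lt_of_surjective_not_injective φ hsurj hninj
      omega
  have hsurj2 : Function.Surjective (Quotient.mk (s (Fintype.card Q))) := by
    intro x
    induction x using Quotient.ind with
    | _ q => exact ⟨q, rfl⟩
  have hle : Fintype.card (Quotient (s (Fintype.card Q))) ≤ Fintype.card Q :=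
    Fintype.card_le_of_surjective (Quotient.mk (s (Fintype.card Q))) hsurj2
  have := key (Fintype.card Q) le_rfl
  omega

namespace NoSurelyEq

variable {A S : Type} [Field S]

/-- Combined transition function of `uwa(A₁) ∪ uwa(A₂)` on the disjoint union
of state sets. -/
def cnext (A₁ A₂ : DWROCA A S) : A₁.Q ⊕ A₂.Q → A → A₁.Q ⊕ A₂.Q
  | .inl q, a => .inl (A₁.next q false a)
  | .inr q, a => .inr (A₂.next q false a)

/-- Combined weight function. -/
def cwt (A₁ A₂ : DWROCA A S) : A₁.Q ⊕ A₂.Q → A → S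
  | .inl q, a => A₁.wt q false a
  | .inr q, a => A₂.wt q false a

lemma cwt_ne (A₁ A₂ : DWROCA A S) (q : A₁.Q ⊕ A₂.Q) (a : A) : cwt A₁ A₂ q a ≠ 0 := by
  cases q <;> simp [cwt, A₁.wt_ne, A₂.wt_ne]

/-- Normalised word function of the combined automaton. -/
def cg (A₁ A₂ : DWROCA A S) : A₁.Q ⊕ A₂.Q → List A → S
  | _, [] => 1
  | q, a :: w => cwt A₁ A₂ q a * cg A₁ A₂ (cnext A₁ A₂ q a) w

lemma uval_inl (A₁ A₂ : DWROCA A S) (w : List A) :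
    ∀ (q : A₁.Q) (s : S), A₁.uval (q, s) w = s * cg A₁ A₂ (.inl q) w := by
  induction w with
  | nil => intro q s; simp [DWROCA.uval, cg]
  | cons a w ih =>
    intro q s
    have : A₁.uval (q, s) (a :: w) = A₁.uval (A₁.ustep (q, s) a) w := rfl
    rw [this]
    simp [DWROCA.ustep, ih, cg, cnext, cwt, mul_assoc]

lemma uval_inr (A₁ A₂ : DWROCA A S) (w : List A) :
    ∀ (q : A₂.Q) (s : S), A₂.uval (q, s) w = s * cg A₁ A₂ (.inr q) w := by
  induction w with
  | nil => intro q s; simp [DWROCA.uval, cg]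
  | cons a w ih =>
    intro q s
    have : A₂.uval (q, s) (a :: w) = A₂.uval (A₂.ustep (q, s) a) w := rfl
    rw [this]
    simp [DWROCA.ustep, ih, cg, cnext, cwt, mul_assoc]

/-- `k`-indistinguishability of combined states. -/
def crel (A₁ A₂ : DWROCA A S) (k : ℕ) (q q' : A₁.Q ⊕ A₂.Q) : Prop :=
  ∀ w : List A, w.length ≤ k → cg A₁ A₂ q w = cg A₁ A₂ q' w

lemma crel_equiv (A₁ A₂ : DWROCA A S) (k : ℕ) : Equivalence (crel A₁ A₂ k) :=
  ⟨fun _ _ _ => rfl, fun h w hw => (h w hw).symm, fun h h' w hw => (h w hw).trans (h' w hw)⟩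

lemma crel_mono (A₁ A₂ : DWROCA A S) {j k : ℕ} (hjk : j ≤ k) {q q' : A₁.Q ⊕ A₂.Q}
    (h : crel A₁ A₂ k q q') : crel A₁ A₂ j q q' :=
  fun w hw => h w (le_trans hw hjk)

lemma crel_succ_iff (A₁ A₂ : DWROCA A S) (k : ℕ) (q q' : A₁.Q ⊕ A₂.Q) :
    crel A₁ A₂ (k+1) q q' ↔
      ∀ a : A, cwt A₁ A₂ q a = cwt A₁ A₂ q' a ∧
        crel A₁ A₂ k (cnext A₁ A₂ q a) (cnext A₁ A₂ q' a) := by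
  constructor
  · intro h a
    have hwt : cwt A₁ A₂ q a = cwt A₁ A₂ q' a := by
      have := h [a] (by simp)
      simpa [cg] using this
    refine ⟨hwt, fun w hw => ?_⟩
    have := h (a :: w) (by simpa using Nat.succ_le_succ hw)
    rw [cg, cg, hwt] at this
    exact mul_left_cancel₀ (cwt_ne A₁ A₂ q' a) this
  · intro h w hw
    cases w with
    | nil => rfl
    | cons a w =>
      rw [cg, cg, (h a).1, (h a).2 w (by simpa using Nat.le_of_succ_le_succ hw)]

lemma crel_all (A₁ A₂ : DWROCA A S) {q q' : A₁.Q ⊕ A₂.Q}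
    (h : crel A₁ A₂ (Fintype.card (A₁.Q ⊕ A₂.Q) - 1) q q') :
    ∀ m, crel A₁ A₂ m q q' := by
  haveI : Nonempty (A₁.Q ⊕ A₂.Q) := ⟨.inl A₁.q0⟩
  obtain ⟨k, hk, hstab⟩ := stab_exists (crel A₁ A₂) (crel_equiv A₁ A₂)
    (fun k q q' h => crel_mono A₁ A₂ (Nat.le_succ k) h)
  -- stability propagates
  have hstep : ∀ j q q', crel A₁ A₂ (k+j) q q' ↔ crel A₁ A₂ (k+j+1) q q' := by
    intro j
    induction j with
    | zero => exact hstab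
    | succ j ih =>
      intro q q'
      rw [show k + (j+1) = (k+j) + 1 by ring, crel_succ_iff, crel_succ_iff]
      constructor
      · intro h a; exact ⟨(h a).1, (ih _ _).mp (h a).2⟩
      · intro h a; exact ⟨(h a).1, (ih _ _).mpr (h a).2⟩
  have hup : ∀ j {q q' : A₁.Q ⊕ A₂.Q}, crel A₁ A₂ k q q' → crel A₁ A₂ (k+j) q q' := by
    intro j
    induction j with
    | zero => intro q q' h; exact h
    | succ j ih =>
      intro q q' h
      rw [show k + (j+1) = (k+j) + 1 by ring]
      exact (hstep j q q').mp (ih h)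
  intro m
  have hkle : k ≤ Fintype.card (A₁.Q ⊕ A₂.Q) - 1 := by omega
  have hck : crel A₁ A₂ k q q' := crel_mono A₁ A₂ hkle h
  exact crel_mono A₁ A₂ (Nat.le_add_left m k) (hup m hck)

/-- Extension lemma for configurations of the combined weighted automaton. -/
lemma cpair_ext (A₁ A₂ : DWROCA A S) (p p' : (A₁.Q ⊕ A₂.Q) × S)
    (h : ∀ w : List A, w.length ≤ Fintype.card (A₁.Q ⊕ A₂.Q) - 1 →
      p.2 * cg A₁ A₂ p.1 w = p'.2 * cg A₁ A₂ p'.1 w) :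
    ∀ w : List A, p.2 * cg A₁ A₂ p.1 w = p'.2 * cg A₁ A₂ p'.1 w := by
  have hs : p.2 = p'.2 := by
    have := h [] (by simp)
    simpa [cg] using this
  by_cases hz : p.2 = 0
  · intro w; rw [hz, ← hs, hz, zero_mul, zero_mul]
  · have hcr : crel A₁ A₂ (Fintype.card (A₁.Q ⊕ A₂.Q) - 1) p.1 p'.1 := by
      intro w hw
      have := h w hw
      rw [hs] at this
      exact mul_left_cancel₀ (hs ▸ hz) this
    intro w
    rw [hs, crel_all A₁ A₂ hcr w.length w le_rfl]

lemma run_cons (M : DWROCA A S) (c : M.Cfg) (a : A) (w : List A) :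
    M.run c (a :: w) = M.run (M.step c a) w := rfl

lemma val_cons (M : DWROCA A S) (c : M.Cfg) (a : A) (w : List A) :
    M.val c (a :: w) = M.val (M.step c a) w := rfl

lemma run_append (M : DWROCA A S) (c : M.Cfg) (u v : List A) :
    M.run c (u ++ v) = M.run (M.run c u) v := List.foldl_append

/-- From not being in NWA, extract a `K`-equivalent combined uwa configuration. -/
lemma notNWA_ex (A₁ A₂ M : DWROCA A S) (c : M.Cfg) (K : ℕ)
    (h : ¬ inNWA A₁ A₂ M c K) :
    ∃ p : (A₁.Q ⊕ A₂.Q) × S, ∀ w : List A, w.length ≤ K →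
      M.val c w = p.2 * cg A₁ A₂ p.1 w := by
  rw [inNWA, not_and_or] at h
  rcases h with h | h
  · push_neg at h
    obtain ⟨d, hd⟩ := h
    exact ⟨(.inl d.1, d.2), fun w hw => by
      rw [hd w hw, show A₁.uval d w = A₁.uval (d.1, d.2) w from rfl, uval_inl A₁ A₂]⟩
  · push_neg at h
    obtain ⟨d, hd⟩ := h
    exact ⟨(.inr d.1, d.2), fun w hw => by
      rw [hd w hw, show A₂.uval d w = A₂.uval (d.1, d.2) w from rfl, uval_inr A₁ A₂]⟩

/-- `dist = ⊤` means every reachable configuration avoids NWA. -/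
lemma dist_top_forall (A₁ A₂ M : DWROCA A S) (c : M.Cfg) (K : ℕ)
    (h : distNWA A₁ A₂ M c K = ⊤) :
    ∀ v : List A, ¬ inNWA A₁ A₂ M (M.run c v) K := by
  intro v hv
  have hmem : ((v.length : ℕ∞)) ∈
      {n : ℕ∞ | ∃ w : List A, (w.length : ℕ∞) = n ∧ inNWA A₁ A₂ M (M.run c w) K} :=
    ⟨v, rfl, hv⟩
  have := sInf_le hmem
  rw [distNWA] at h
  rw [h, top_le_iff] at this
  exact (ENat.coe_ne_top v.length) this

/-- Key lemma: `K`-equivalent configurations all of whose successors stay in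
WA are `m`-equivalent for every `m`. -/
lemma full_equiv (A₁ A₂ : DWROCA A S) (K : ℕ)
    (hK : K = Fintype.card A₁.Q + Fintype.card A₂.Q) :
    ∀ m (χ : A₁.Cfg) (ψ : A₂.Cfg),
      (∀ v : List A, ¬ inNWA A₁ A₂ A₁ (A₁.run χ v) K) →
      (∀ v : List A, ¬ inNWA A₁ A₂ A₂ (A₂.run ψ v) K) →
      kEquiv A₁ A₂ χ ψ K → kEquiv A₁ A₂ χ ψ m := by
  have hcard : Fintype.card (A₁.Q ⊕ A₂.Q) = K := by rw [Fintype.card_sum, hK]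
  have hKpos : 1 ≤ K := by
    have : 0 < Fintype.card A₁.Q := @Fintype.card_pos _ _ ⟨A₁.q0⟩
    omega
  intro m
  induction m with
  | zero => intro χ ψ _ _ hk w hw; exact hk w (le_trans hw (Nat.zero_le K))
  | succ m ih =>
    intro χ ψ h1 h2 hk w hw
    by_cases hmK : m + 1 ≤ K
    · exact hk w (le_trans hw hmK)
    cases w with
    | nil => exact hk [] (by simp)
    | cons a u =>
      have hu : u.length ≤ m := by simpa using hw
      rw [val_cons, val_cons]
      set χ' := A₁.step χ a with hχ'
      set ψ' := A₂.step ψ a with hψ'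
      have h1' : ∀ v : List A, ¬ inNWA A₁ A₂ A₁ (A₁.run χ' v) K := by
        intro v; have := h1 (a :: v); rwa [run_cons] at this
      have h2' : ∀ v : List A, ¬ inNWA A₁ A₂ A₂ (A₂.run ψ' v) K := by
        intro v; have := h2 (a :: v); rwa [run_cons] at this
      -- K-1 equivalence of the successors
      have hk' : ∀ w : List A, w.length ≤ K - 1 → A₁.val χ' w = A₂.val ψ' w := by
        intro w hwl
        have := hk (a :: w) (by simp; omega)
        rwa [val_cons, val_cons] at this
      -- both successors are WA
      obtain ⟨p, hp⟩ := notNWA_ex A₁ A₂ A₁ χ' K (by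
        have := h1' []; rwa [show A₁.run χ' [] = χ' from rfl] at this)
      obtain ⟨p', hp'⟩ := notNWA_ex A₁ A₂ A₂ ψ' K (by
        have := h2' []; rwa [show A₂.run ψ' [] = ψ' from rfl] at this)
      have hpe : ∀ w : List A, p.2 * cg A₁ A₂ p.1 w = p'.2 * cg A₁ A₂ p'.1 w := by
        apply cpair_ext
        intro w hwl
        rw [hcard] at hwl
        rw [← hp w (by omega), ← hp' w (by omega)]
        exact hk' w hwl
      have hkK : kEquiv A₁ A₂ χ' ψ' K := by
        intro w hwl
        rw [hp w hwl, hp' w hwl, hpe w]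
      exact ih χ' ψ' h1' h2' hkK u hu

end NoSurelyEq

/-- There is no surely-equivalent configuration pair in the run of
a minimal witness. -/
theorem no_surely_equivalent_in_min_run {A S : Type} [Field S]
    (A₁ A₂ : DWROCA A S) (K : ℕ)
    (hK : K = Fintype.card A₁.Q + Fintype.card A₂.Q)
    (w : List A) (hw : IsMinWitness A₁ A₂ w)
    (i : ℕ) (hi : i ≤ w.length) :
    ¬ surelyEq A₁ A₂ (pairAt A₁ A₂ w i).1 (pairAt A₁ A₂ w i).2 K := by
  rintro ⟨hkE, hd1, hd2⟩
  set χ : A₁.Cfg := A₁.run A₁.init (w.take i) with hχ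
  set ψ : A₂.Cfg := A₂.run A₂.init (w.take i) with hψ
  have h1 : ∀ v : List A, ¬ inNWA A₁ A₂ A₁ (A₁.run χ v) K :=
    NoSurelyEq.dist_top_forall A₁ A₂ A₁ χ K hd1
  have h2 : ∀ v : List A, ¬ inNWA A₁ A₂ A₂ (A₂.run ψ v) K :=
    NoSurelyEq.dist_top_forall A₁ A₂ A₂ ψ K hd2
  have hfull := NoSurelyEq.full_equiv A₁ A₂ K hK (w.drop i).length χ ψ h1 h2 hkE
  have heq : A₁.val χ (w.drop i) = A₂.val ψ (w.drop i) := hfull (w.drop i) le_rfl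
  apply hw.1
  have e1 : A₁.f w = A₁.val χ (w.drop i) := by
    rw [DWROCA.f, DWROCA.val, DWROCA.val, hχ, ← NoSurelyEq.run_append]
    conv_lhs => rw [← List.take_append_drop i w]
  have e2 : A₂.f w = A₂.val ψ (w.drop i) := by
    rw [DWROCA.f, DWROCA.val, DWROCA.val, hψ, ← NoSurelyEq.run_append]
    conv_lhs => rw [← List.take_append_drop i w]
  rw [e1, e2, heq]
end

section
/- Let c_j = (χ_j, ψ_j) be the first surely-nonequivalent configuration pair in the run ρ_min = c₀τ₀c₁τ₁…c_L of a minimal witness. Then L − j ≤ min{dist(χ_j), dist(ψ_j)} + K; in other words, the remaining length of the minimal witness after the first surely-nonequivalent pair is at most min{dist(χ_j), dist(ψ_j)} + K. -/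
variable {A S : Type} [Field S]

lemma DWROCA.run_append (M : DWROCA A S) (c : M.Cfg) (u v : List A) :
    M.run c (u ++ v) = M.run (M.run c u) v := List.foldl_append

lemma DWROCA.val_append (M : DWROCA A S) (c : M.Cfg) (u v : List A) :
    M.val c (u ++ v) = M.val (M.run c u) v := by
  simp [DWROCA.val, DWROCA.run_append]

lemma distNWA_le (A₁ A₂ M : DWROCA A S) (c : M.Cfg) (K : ℕ) (u : List A)
    (h : inNWA A₁ A₂ M (M.run c u) K) :
    distNWA A₁ A₂ M c K ≤ (u.length : ℕ∞) :=
  sInf_le ⟨u, rfl, h⟩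

lemma distNWA_attained (A₁ A₂ M : DWROCA A S) (c : M.Cfg) (K : ℕ)
    (h : distNWA A₁ A₂ M c K ≠ ⊤) :
    ∃ u : List A, (u.length : ℕ∞) = distNWA A₁ A₂ M c K ∧
      inNWA A₁ A₂ M (M.run c u) K := by
  have hlt : distNWA A₁ A₂ M c K < distNWA A₁ A₂ M c K + 1 :=
    (ENat.lt_add_one_iff h).mpr le_rfl
  obtain ⟨x, hx, hxlt⟩ := sInf_lt_iff.mp hlt
  obtain ⟨u, hu, huNWA⟩ := hx
  have h1 : distNWA A₁ A₂ M c K ≤ x := sInf_le ⟨u, hu, huNWA⟩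
  have h2 : x ≤ distNWA A₁ A₂ M c K := (ENat.lt_add_one_iff h).mp hxlt
  exact ⟨u, hu.trans (le_antisymm h2 h1), huNWA⟩

/-- If `c` is in NWA and `d` is not, then `c ≢_K d`. -/
lemma not_kEquiv_left (A₁ A₂ : DWROCA A S) (K : ℕ) (c : A₁.Cfg) (d : A₂.Cfg)
    (hc : inNWA A₁ A₂ A₁ c K) (hd : ¬ inNWA A₁ A₂ A₂ d K) :
    ¬ kEquiv A₁ A₂ c d K := by
  intro heq
  rw [inNWA, not_and_or] at hd
  rcases hd with hd | hd <;> push_neg at hd <;> obtain ⟨e, he⟩ := hd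
  · exact hc.1 e (fun v hv => (heq v hv).trans (he v hv))
  · exact hc.2 e (fun v hv => (heq v hv).trans (he v hv))

/-- If `d` is in NWA and `c` is not, then `c ≢_K d`. -/
lemma not_kEquiv_right (A₁ A₂ : DWROCA A S) (K : ℕ) (c : A₁.Cfg) (d : A₂.Cfg)
    (hd : inNWA A₁ A₂ A₂ d K) (hc : ¬ inNWA A₁ A₂ A₁ c K) :
    ¬ kEquiv A₁ A₂ c d K := by
  intro heq
  rw [inNWA, not_and_or] at hc
  rcases hc with hc | hc <;> push_neg at hc <;> obtain ⟨e, he⟩ := hc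
  · exact hd.1 e (fun v hv => ((heq v hv).symm).trans (he v hv))
  · exact hd.2 e (fun v hv => ((heq v hv).symm).trans (he v hv))

/-- if `c_j` is the first surely-nonequivalent configuration pair
in the run of a minimal witness of length `L`, then
`L - j ≤ min (dist χ_j) (dist ψ_j) + K`. -/
theorem remaining_length_after_first_surely_nonequivalent {A S : Type} [Field S]
    (A₁ A₂ : DWROCA A S) (K : ℕ)
    (hK : K = Fintype.card A₁.Q + Fintype.card A₂.Q)
    (w : List A) (hw : IsMinWitness A₁ A₂ w)
    (j : ℕ) (hj : j ≤ w.length)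
    (hne : surelyNonEq A₁ A₂ (pairAt A₁ A₂ w j).1 (pairAt A₁ A₂ w j).2 K)
    (hfirst : ∀ i < j, ¬ surelyNonEq A₁ A₂ (pairAt A₁ A₂ w i).1 (pairAt A₁ A₂ w i).2 K) :
    ((w.length - j : ℕ) : ℕ∞) ≤
      min (distNWA A₁ A₂ A₁ (pairAt A₁ A₂ w j).1 K)
          (distNWA A₁ A₂ A₂ (pairAt A₁ A₂ w j).2 K) + (K : ℕ∞) := by
  set χ := (pairAt A₁ A₂ w j).1 with hχ
  set ψ := (pairAt A₁ A₂ w j).2 with hψ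
  -- any word distinguishing (χ, ψ) bounds the length of the minimal witness
  have key : ∀ v : List A, A₁.val χ v ≠ A₂.val ψ v → w.length ≤ j + v.length := by
    intro v hv
    have hwit : A₁.f (w.take j ++ v) ≠ A₂.f (w.take j ++ v) := by
      simpa [DWROCA.f, DWROCA.val_append, hχ, hψ, pairAt] using hv
    have := hw.2 _ hwit
    have hlen : (w.take j ++ v).length = j + v.length := by
      simp [List.length_take, Nat.min_eq_left hj]
    omega
  rcases hne with hne | hne
  · -- case 1: χ ≢_K ψ; the witness has length ≤ j + K
    rw [kEquiv] at hne; push_neg at hne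
    obtain ⟨v, hvK, hv⟩ := hne
    have h1 : w.length - j ≤ K := by have := key v hv; omega
    calc ((w.length - j : ℕ) : ℕ∞) ≤ (K : ℕ∞) := by exact_mod_cast h1
      _ ≤ min (distNWA A₁ A₂ A₁ χ K) (distNWA A₁ A₂ A₂ ψ K) + (K : ℕ∞) := le_add_self
  · -- case 2: the distances differ
    rcases hne.lt_or_gt with hlt | hlt
    · -- dist χ < dist ψ
      have hfin : distNWA A₁ A₂ A₁ χ K ≠ ⊤ := hlt.ne_top
      obtain ⟨u, hu, huNWA⟩ := distNWA_attained A₁ A₂ A₁ χ K hfin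
      have hψnot : ¬ inNWA A₁ A₂ A₂ (A₂.run ψ u) K := by
        intro h
        exact absurd (distNWA_le A₁ A₂ A₂ ψ K u h) (by rw [hu]; exact not_le.mpr hlt)
      have hnk := not_kEquiv_left A₁ A₂ K (A₁.run χ u) (A₂.run ψ u) huNWA hψnot
      rw [kEquiv] at hnk; push_neg at hnk
      obtain ⟨v, hvK, hv⟩ := hnk
      have hv' : A₁.val χ (u ++ v) ≠ A₂.val ψ (u ++ v) := by
        simpa [DWROCA.val_append] using hv
      have h1 : w.length - j ≤ u.length + K := by have := key _ hv'; simp at this; omega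
      have : min (distNWA A₁ A₂ A₁ χ K) (distNWA A₁ A₂ A₂ ψ K) =
          (u.length : ℕ∞) := by rw [min_eq_left hlt.le, hu]
      rw [this, ← Nat.cast_add]
      exact_mod_cast h1
    · -- dist ψ < dist χ
      have hfin : distNWA A₁ A₂ A₂ ψ K ≠ ⊤ := hlt.ne_top
      obtain ⟨u, hu, huNWA⟩ := distNWA_attained A₁ A₂ A₂ ψ K hfin
      have hχnot : ¬ inNWA A₁ A₂ A₁ (A₁.run χ u) K := by
        intro h
        exact absurd (distNWA_le A₁ A₂ A₁ χ K u h) (by rw [hu]; exact not_le.mpr hlt)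
      have hnk := not_kEquiv_right A₁ A₂ K (A₁.run χ u) (A₂.run ψ u) huNWA hχnot
      rw [kEquiv] at hnk; push_neg at hnk
      obtain ⟨v, hvK, hv⟩ := hnk
      have hv' : A₁.val χ (u ++ v) ≠ A₂.val ψ (u ++ v) := by
        simpa [DWROCA.val_append] using hv
      have h1 : w.length - j ≤ u.length + K := by have := key _ hv'; simp at this; omega
      have : min (distNWA A₁ A₂ A₁ χ K) (distNWA A₁ A₂ A₂ ψ K) =
          (u.length : ℕ∞) := by rw [min_eq_right hlt.le, hu]
      rw [this, ← Nat.cast_add]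
      exact_mod_cast h1
end

section
/- Let c be an unresolved configuration pair with max{m_c, n_c} > P₁(K) = 14K⁶, lying in a belt of thickness P₂(K) = 6K⁴ and slope α/β with co-prime α, β ∈ [1, K²]. Then c cannot take a single transition pair to reach a configuration pair c′ that lies inside a different belt of thickness P₂(K) and slope α′/β′ with co-prime α′, β′ ∈ [1, K²]. -/
variable {A S : Type} [Field S]

/-- One step changes the counter by at most 1. -/
lemma step_counter_diff {A S : Type} [Field S] (M : DWROCA A S) (c : M.Cfg) (x : A) :
    |((M.step c x).2.1 : ℤ) - (c.2.1 : ℤ)| ≤ 1 := by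
  have hu := M.upd_mem c.1 (decide (c.2.1 = 0)) x
  simp only [DWROCA.step]
  set u := M.upd c.1 (decide (c.2.1 = 0)) x with hu'
  have hnn : 0 ≤ (c.2.1 : ℤ) + u := by
    rcases hu with h | h | h
    · by_cases hc : c.2.1 = 0
      · exfalso
        have hnz := M.no_dec_on_zero c.1 x
        rw [hc] at hu'
        simp only [decide_true] at hu'
        exact hnz (hu' ▸ h)
      · have : 1 ≤ (c.2.1 : ℤ) := by exact_mod_cast Nat.one_le_iff_ne_zero.mpr hc
        rw [h]; omega
    · rw [h]; positivity
    · rw [h]; positivity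
  rw [Int.toNat_of_nonneg hnn]
  rcases hu with h | h | h <;> rw [h] <;> simp

/-- Cross-product distinctness of distinct coprime slopes. -/
lemma cross_ne {α β α' β' : ℕ} (hα : 1 ≤ α) (hα'' : 1 ≤ α')
    (hcop : Nat.Coprime α β) (hcop' : Nat.Coprime α' β')
    (hne : (α', β') ≠ (α, β)) : α * β' ≠ α' * β := by
  intro h
  apply hne
  have h1 : α ∣ α' := by
    have : α ∣ α' * β := ⟨β', by linarith [h]⟩
    exact (Nat.Coprime.dvd_of_dvd_mul_right hcop this)
  have h2 : α' ∣ α := by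
    have : α' ∣ α * β' := ⟨β, by linarith [h.symm]⟩
    exact (Nat.Coprime.dvd_of_dvd_mul_right hcop' this)
  have hαα : α = α' := Nat.dvd_antisymm h1 h2
  have hββ : β' = β := by
    subst hαα
    exact Nat.eq_of_mul_eq_mul_left (by omega) h
  simp [hαα, hββ]

set_option maxHeartbeats 1000000 in
/-- an unresolved configuration pair with `max{m,n} > 14K⁶` lying
in a belt of thickness `6K⁴` and slope `α/β` cannot take a single transition
pair into a different belt of thickness `6K⁴` and slope `α'/β'` with co-prime
`α', β' ∈ [1, K²]`. -/
theorem unresolved_no_belt_change {A S : Type} [Field S]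
    (A₁ A₂ : DWROCA A S) (K : ℕ)
    (hK : K = Fintype.card A₁.Q + Fintype.card A₂.Q)
    (χ : A₁.Cfg) (ψ : A₂.Cfg)
    (hunres : unresolved A₁ A₂ χ ψ K)
    (hbig : max χ.2.1 ψ.2.1 > 14 * K ^ 6)
    (α β : ℕ) (hα : 1 ≤ α) (hα' : α ≤ K ^ 2) (hβ : 1 ≤ β) (hβ' : β ≤ K ^ 2)
    (hcop : Nat.Coprime α β)
    (hin : inBelt α β (6 * K ^ 4) (χ, ψ)) :
    ∀ x : A, ∀ α' β' : ℕ,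
      1 ≤ α' → α' ≤ K ^ 2 → 1 ≤ β' → β' ≤ K ^ 2 → Nat.Coprime α' β' →
      (α', β') ≠ (α, β) →
      ¬ inBelt α' β' (6 * K ^ 4) (A₁.step χ x, A₂.step ψ x) := by
  intro x α' β' hα1' hα2' hβ1' hβ2' hcop' hne hin'
  have hK1 : 1 ≤ K := by
    rcases Nat.eq_zero_or_pos K with h | h
    · subst h; simp at hα'; omega
    · exact h
  -- notation
  set m : ℤ := (χ.2.1 : ℤ) with hm
  set n : ℤ := (ψ.2.1 : ℤ) with hn
  set m1 : ℤ := ((A₁.step χ x).2.1 : ℤ) with hm1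
  set n1 : ℤ := ((A₂.step ψ x).2.1 : ℤ) with hn1
  have hdm : |m1 - m| ≤ 1 := step_counter_diff A₁ χ x
  have hdn : |n1 - n| ≤ 1 := step_counter_diff A₂ ψ x
  have he : |(α : ℤ) * m - (β : ℤ) * n| ≤ (6 * K ^ 4 : ℕ) := hin
  have he' : |(α' : ℤ) * m1 - (β' : ℤ) * n1| ≤ (6 * K ^ 4 : ℕ) := hin'
  -- bound on e'' = α' m - β' n
  have hα'nn : (0 : ℤ) ≤ (α' : ℤ) := Int.natCast_nonneg _
  have hβ'nn : (0 : ℤ) ≤ (β' : ℤ) := Int.natCast_nonneg _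
  have he'' : |(α' : ℤ) * m - (β' : ℤ) * n| ≤ (6 * K ^ 4 : ℕ) + α' + β' := by
    have h1 : (α' : ℤ) * m - (β' : ℤ) * n =
        ((α' : ℤ) * m1 - (β' : ℤ) * n1) - (α' : ℤ) * (m1 - m) + (β' : ℤ) * (n1 - n) := by
      ring
    rw [h1]
    calc |((α' : ℤ) * m1 - (β' : ℤ) * n1) - (α' : ℤ) * (m1 - m) + (β' : ℤ) * (n1 - n)|
        ≤ |((α' : ℤ) * m1 - (β' : ℤ) * n1) - (α' : ℤ) * (m1 - m)| + |(β' : ℤ) * (n1 - n)| :=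
          abs_add_le _ _
      _ ≤ |(α' : ℤ) * m1 - (β' : ℤ) * n1| + |(α' : ℤ) * (m1 - m)| + |(β' : ℤ) * (n1 - n)| := by
          linarith [abs_sub ((α' : ℤ) * m1 - (β' : ℤ) * n1) ((α' : ℤ) * (m1 - m))]
      _ ≤ ((6 * K ^ 4 : ℕ) : ℤ) + α' + β' := by
          rw [abs_mul, abs_mul, abs_of_nonneg hα'nn, abs_of_nonneg hβ'nn]
          have h2 : (α' : ℤ) * |m1 - m| ≤ (α' : ℤ) * 1 := by
            exact mul_le_mul_of_nonneg_left hdm hα'nn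
          have h3 : (β' : ℤ) * |n1 - n| ≤ (β' : ℤ) * 1 := by
            exact mul_le_mul_of_nonneg_left hdn hβ'nn
          linarith
  -- cross-product
  set Δ : ℤ := (α : ℤ) * β' - (α' : ℤ) * β with hΔdef
  have hΔ : Δ ≠ 0 := by
    have := cross_ne hα hα1' hcop hcop' hne
    intro h
    apply this
    have : ((α * β' : ℕ) : ℤ) = ((α' * β : ℕ) : ℤ) := by push_cast; omega
    exact_mod_cast this
  have hΔ1 : 1 ≤ |Δ| := Int.one_le_abs hΔ
  -- key identities
  have hidm : Δ * m = (β' : ℤ) * ((α : ℤ) * m - (β : ℤ) * n)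
      - (β : ℤ) * ((α' : ℤ) * m - (β' : ℤ) * n) := by ring
  have hidn : Δ * n = (α' : ℤ) * ((α : ℤ) * m - (β : ℤ) * n)
      - (α : ℤ) * ((α' : ℤ) * m - (β' : ℤ) * n) := by ring
  -- bounds
  have hβz : ((β : ℕ) : ℤ) ≤ (K : ℤ) ^ 2 := by exact_mod_cast hβ'
  have hβ'z : ((β' : ℕ) : ℤ) ≤ (K : ℤ) ^ 2 := by exact_mod_cast hβ2'
  have hαz : ((α : ℕ) : ℤ) ≤ (K : ℤ) ^ 2 := by exact_mod_cast hα'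
  have hα'z : ((α' : ℕ) : ℤ) ≤ (K : ℤ) ^ 2 := by exact_mod_cast hα2'
  have hKz : (1 : ℤ) ≤ (K : ℤ) := by exact_mod_cast hK1
  have hbound : ∀ p q : ℤ, 0 ≤ p → 0 ≤ q → p ≤ (K:ℤ)^2 → q ≤ (K:ℤ)^2 →
      ∀ z : ℤ, Δ * z = p * ((α : ℤ) * m - (β : ℤ) * n)
        - q * ((α' : ℤ) * m - (β' : ℤ) * n) → 0 ≤ z → z ≤ 14 * (K:ℤ)^6 := by
    intro p q hp hq hpK hqK z hid hz
    have h1 : |Δ * z| ≤ p * ((6 * K ^ 4 : ℕ) : ℤ) + q * (((6 * K ^ 4 : ℕ) : ℤ) + α' + β') := by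
      rw [hid]
      calc |p * ((α : ℤ) * m - (β : ℤ) * n) - q * ((α' : ℤ) * m - (β' : ℤ) * n)|
          ≤ |p * ((α : ℤ) * m - (β : ℤ) * n)| + |q * ((α' : ℤ) * m - (β' : ℤ) * n)| :=
            abs_sub _ _
        _ ≤ p * ((6 * K ^ 4 : ℕ) : ℤ) + q * (((6 * K ^ 4 : ℕ) : ℤ) + α' + β') := by
            rw [abs_mul, abs_mul, abs_of_nonneg hp, abs_of_nonneg hq]
            have := mul_le_mul_of_nonneg_left he hp
            have := mul_le_mul_of_nonneg_left he'' hq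
            linarith
    have h2 : z ≤ |Δ * z| := by
      rw [abs_mul]
      calc z = 1 * z := (one_mul z).symm
        _ ≤ |Δ| * z := mul_le_mul_of_nonneg_right hΔ1 hz
        _ ≤ |Δ| * |z| := mul_le_mul_of_nonneg_left (le_abs_self z) (abs_nonneg Δ)
    have h6 : ((6 * K ^ 4 : ℕ) : ℤ) = 6 * (K:ℤ)^4 := by push_cast; ring
    rw [h6] at h1
    have hp6 : p * (6 * (K:ℤ)^4) ≤ 6 * (K:ℤ)^6 := by
      calc p * (6 * (K:ℤ)^4) ≤ (K:ℤ)^2 * (6 * (K:ℤ)^4) :=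
            mul_le_mul_of_nonneg_right hpK (by positivity)
        _ = 6 * (K:ℤ)^6 := by ring
    have hq6 : q * (6 * (K:ℤ)^4 + α' + β') ≤ 6 * (K:ℤ)^6 + 2 * (K:ℤ)^4 := by
      have h8 : (6 * (K:ℤ)^4 + α' + β') ≤ 6 * (K:ℤ)^4 + 2 * (K:ℤ)^2 := by linarith
      calc q * (6 * (K:ℤ)^4 + α' + β') ≤ (K:ℤ)^2 * (6 * (K:ℤ)^4 + α' + β') :=
            mul_le_mul_of_nonneg_right hqK (by positivity)
        _ ≤ (K:ℤ)^2 * (6 * (K:ℤ)^4 + 2 * (K:ℤ)^2) :=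
            mul_le_mul_of_nonneg_left h8 (by positivity)
        _ = 6 * (K:ℤ)^6 + 2 * (K:ℤ)^4 := by ring
    have hK46 : (K:ℤ)^4 ≤ (K:ℤ)^6 := pow_le_pow_right₀ hKz (by norm_num)
    linarith
  have hmb : m ≤ 14 * (K:ℤ)^6 :=
    hbound (β' : ℤ) (β : ℤ) hβ'nn (Int.natCast_nonneg _) hβ'z hβz m hidm
      (by rw [hm]; exact Int.natCast_nonneg _)
  have hnb : n ≤ 14 * (K:ℤ)^6 :=
    hbound (α' : ℤ) (α : ℤ) hα'nn (Int.natCast_nonneg _) hα'z hαz n hidn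
      (by rw [hn]; exact Int.natCast_nonneg _)
  -- contradiction with hbig
  have hbig' : 14 * K ^ 6 < max χ.2.1 ψ.2.1 := hbig
  rcases max_cases χ.2.1 ψ.2.1 with ⟨hmax, _⟩ | ⟨hmax, _⟩ <;> rw [hmax] at hbig'
  · have h14 : (14 : ℤ) * (K:ℤ)^6 < m := by rw [hm]; exact_mod_cast hbig'
    linarith
  · have h14 : (14 : ℤ) * (K:ℤ)^6 < n := by rw [hn]; exact_mod_cast hbig'
    linarith
end

section
/- (Cut lemma.) Let c be a configuration pair and T a sequence of transition pairs such that every configuration pair along the run T(c) lies inside a single belt of slope α/β with co-prime α, β ∈ [1, K²] and thickness P₂(K) = 6K⁴, and such that the total counter effect of T on the first component exceeds K²·P₂(K) (or the counter effect on the second component exceeds K²·P₂(K)). Then there exist indices i < j such that: (1) the configuration pairs T_{1…i}(c) and T_{1…j}(c) are (α/β)-related, and (2) the sequence T_{1…i}T_{j+1…|T|} applied to c is a valid run that stays inside the same belt. -/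
variable {A S : Type} [Field S]

section helpers

variable {A S : Type} [Field S]

lemma runPair_concat (A₁ A₂ : DWROCA A S) (c : A₁.Cfg × A₂.Cfg) (u : List A) (x : A) :
    runPair A₁ A₂ c (u ++ [x]) =
      (A₁.step (runPair A₁ A₂ c u).1 x, A₂.step (runPair A₁ A₂ c u).2 x) := by
  simp [runPair, DWROCA.run, List.foldl_append]

lemma step_cnt_bound (M : DWROCA A S) (c : M.Cfg) (x : A) :
    (M.step c x).2.1 ≤ c.2.1 + 1 ∧ c.2.1 ≤ (M.step c x).2.1 + 1 := by
  have hu := M.upd_mem c.1 (decide (c.2.1 = 0)) x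
  simp only [Set.mem_insert_iff, Set.mem_singleton_iff] at hu
  simp only [DWROCA.step]
  rcases hu with h|h|h <;> rw [h] <;> omega

lemma step_shift (M : DWROCA A S) (c c' : M.Cfg) (x : A) (D : ℕ)
    (hst : c.1 = c'.1) (hcnt : c.2.1 + D = c'.2.1) (hpos : 1 ≤ c.2.1) :
    (M.step c x).1 = (M.step c' x).1 ∧ (M.step c x).2.1 + D = (M.step c' x).2.1 := by
  have h1 : (decide (c.2.1 = 0)) = false := decide_eq_false (by omega)
  have h2 : (decide (c'.2.1 = 0)) = false := decide_eq_false (by omega)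
  have hu := M.upd_mem c.1 false x
  simp only [Set.mem_insert_iff, Set.mem_singleton_iff] at hu
  constructor
  · simp only [DWROCA.step, h1, h2, hst]
  · simp only [DWROCA.step, h1, h2, ← hst]
    rcases hu with h|h|h <;> rw [h] <;> omega

end helpers

section lemA
variable {A S : Type} [Field S]

lemma cut_run (A₁ A₂ : DWROCA A S) (α β : ℕ)
    (c : A₁.Cfg × A₂.Cfg) (T : List A) (d : ℕ)
    (hbelt : ∀ r ≤ T.length, inBelt α β d (runPair A₁ A₂ c (T.take r)))
    (i j : ℕ) (hij : i < j) (hjN : j ≤ T.length)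
    (hp : (runPair A₁ A₂ c (T.take i)).1.1 = (runPair A₁ A₂ c (T.take j)).1.1)
    (hq : (runPair A₁ A₂ c (T.take i)).2.1 = (runPair A₁ A₂ c (T.take j)).2.1)
    (Dm Dn : ℕ)
    (hDm : (runPair A₁ A₂ c (T.take i)).1.2.1 + Dm = (runPair A₁ A₂ c (T.take j)).1.2.1)
    (hDn : (runPair A₁ A₂ c (T.take i)).2.2.1 + Dn = (runPair A₁ A₂ c (T.take j)).2.2.1)
    (hab : α * Dm = β * Dn)
    (hposm : ∀ k, j ≤ k → k ≤ T.length → Dm + 1 ≤ (runPair A₁ A₂ c (T.take k)).1.2.1)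
    (hposn : ∀ k, j ≤ k → k ≤ T.length → Dn + 1 ≤ (runPair A₁ A₂ c (T.take k)).2.2.1) :
    abRelated α β (runPair A₁ A₂ c (T.take i)) (runPair A₁ A₂ c (T.take j)) ∧
    ∀ r ≤ (T.take i ++ T.drop j).length,
      inBelt α β d (runPair A₁ A₂ c ((T.take i ++ T.drop j).take r)) := by
  have habZ : (α : ℤ) * Dm = (β : ℤ) * Dn := by exact_mod_cast hab
  constructor
  · refine ⟨hp, hq, ?_⟩
    rw [← hDm, ← hDn]
    push_cast
    linarith
  -- the key invariant
  have key : ∀ r, r ≤ T.length - j →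
      (runPair A₁ A₂ c (T.take i ++ (T.drop j).take r)).1.1 =
        (runPair A₁ A₂ c (T.take (j + r))).1.1 ∧
      (runPair A₁ A₂ c (T.take i ++ (T.drop j).take r)).2.1 =
        (runPair A₁ A₂ c (T.take (j + r))).2.1 ∧
      (runPair A₁ A₂ c (T.take i ++ (T.drop j).take r)).1.2.1 + Dm =
        (runPair A₁ A₂ c (T.take (j + r))).1.2.1 ∧
      (runPair A₁ A₂ c (T.take i ++ (T.drop j).take r)).2.2.1 + Dn =
        (runPair A₁ A₂ c (T.take (j + r))).2.2.1 := by
    intro r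
    induction r with
    | zero =>
      intro _
      simpa using ⟨hp, hq, hDm, hDn⟩
    | succ r ih =>
      intro hr
      obtain ⟨e1, e2, e3, e4⟩ := ih (by omega)
      have hjr : j + r < T.length := by omega
      have hlen : r < (T.drop j).length := by simp [List.length_drop]; omega
      have hTd : (T.drop j).take (r + 1) = (T.drop j).take r ++ [T[j + r]] := by
        rw [List.take_succ, List.getElem?_eq_getElem hlen]
        have : (T.drop j)[r] = T[j + r] := List.getElem_drop
        rw [this]; rfl
      have hLHS : T.take i ++ (T.drop j).take (r + 1) =
          (T.take i ++ (T.drop j).take r) ++ [T[j + r]] := by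
        rw [hTd, List.append_assoc]
      have hRHS : T.take (j + (r + 1)) = T.take (j + r) ++ [T[j + r]] := by
        rw [show j + (r+1) = (j+r) + 1 by omega, List.take_succ,
          List.getElem?_eq_getElem hjr]; rfl
      have hm := hposm (j + r) (by omega) (by omega)
      have hn := hposn (j + r) (by omega) (by omega)
      have s1 := step_shift A₁ (runPair A₁ A₂ c (T.take i ++ (T.drop j).take r)).1
        (runPair A₁ A₂ c (T.take (j + r))).1 T[j + r] Dm e1 e3 (by omega)
      have s2 := step_shift A₂ (runPair A₁ A₂ c (T.take i ++ (T.drop j).take r)).2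
        (runPair A₁ A₂ c (T.take (j + r))).2 T[j + r] Dn e2 e4 (by omega)
      rw [hLHS, hRHS, runPair_concat, runPair_concat]
      exact ⟨s1.1, s2.1, s1.2, s2.2⟩
  -- belt of the cut run
  intro r hr
  have hlenTi : (T.take i).length = i := by
    rw [List.length_take]; omega
  rcases le_or_gt r i with hri | hri
  · have : (T.take i ++ T.drop j).take r = T.take r := by
      rw [List.take_append, hlenTi, show r - i = 0 by omega,
        List.take_take, List.take_zero, List.append_nil, show min r i = r by omega]
    rw [this]
    exact hbelt r (by omega)
  · set s := r - i with hs
    have hsN : s ≤ T.length - j := by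
      rw [List.length_append, hlenTi, List.length_drop] at hr
      omega
    have : (T.take i ++ T.drop j).take r = T.take i ++ (T.drop j).take s := by
      rw [List.take_append, hlenTi,
        List.take_take, show min r i = i by omega, hs]
    rw [this]
    obtain ⟨e1, e2, e3, e4⟩ := key s hsN
    have hb := hbelt (j + s) (by omega)
    unfold inBelt at hb ⊢
    have c3 : ((runPair A₁ A₂ c (T.take i ++ (T.drop j).take s)).1.2.1 : ℤ)
        = ((runPair A₁ A₂ c (T.take (j + s))).1.2.1 : ℤ) - Dm := by
      omega
    have c4 : ((runPair A₁ A₂ c (T.take i ++ (T.drop j).take s)).2.2.1 : ℤ)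
        = ((runPair A₁ A₂ c (T.take (j + s))).2.2.1 : ℤ) - Dn := by
      omega
    rw [c3, c4]
    have : (α : ℤ) * (((runPair A₁ A₂ c (T.take (j + s))).1.2.1 : ℤ) - Dm)
        - (β : ℤ) * (((runPair A₁ A₂ c (T.take (j + s))).2.2.1 : ℤ) - Dn)
        = (α : ℤ) * ((runPair A₁ A₂ c (T.take (j + s))).1.2.1 : ℤ)
        - (β : ℤ) * ((runPair A₁ A₂ c (T.take (j + s))).2.2.1 : ℤ) := by
      linear_combination -habZ
    rw [this]
    exact hb
end lemA

section comb

lemma nat_ivt (m : ℕ → ℕ) (hstep : ∀ k, m (k+1) ≤ m k + 1)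
    {a b h : ℕ} (hab : a ≤ b) (ha : m a ≤ h) (hb : h ≤ m b) :
    ∃ k, a ≤ k ∧ k ≤ b ∧ m k = h := by
  classical
  set k0 := Nat.findGreatest (fun k => m (a + k) ≤ h) (b - a) with hk0
  have h0 : m (a + k0) ≤ h :=
    Nat.findGreatest_spec (P := fun k => m (a + k) ≤ h) (Nat.zero_le _) (by simpa using ha)
  have hk0b : k0 ≤ b - a := Nat.findGreatest_le _
  rcases eq_or_lt_of_le hk0b with heq | hlt
  · refine ⟨a + k0, Nat.le_add_right _ _, by omega, ?_⟩
    have : a + k0 = b := by omega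
    rw [this] at h0 ⊢
    omega
  · have hgt : ¬ m (a + k0 + 1) ≤ h := by
      have := Nat.findGreatest_is_greatest (P := fun k => m (a + k) ≤ h)
        (Nat.lt_succ_self k0) (show k0 + 1 ≤ b - a by omega)
      simpa [← Nat.add_assoc] using this
    have := hstep (a + k0)
    refine ⟨a + k0, Nat.le_add_right _ _, by omega, by omega⟩

lemma last_occ (m : ℕ → ℕ) (hstep : ∀ k, m (k+1) ≤ m k + 1)
    {N h : ℕ} (hex : ∃ k, k ≤ N ∧ m k = h) (hN : h ≤ m N) :
    ∃ j, j ≤ N ∧ m j = h ∧ ∀ k, j < k → k ≤ N → h < m k := by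
  classical
  set j := Nat.findGreatest (fun k => m k = h) N with hj
  obtain ⟨k0, hk0N, hk0⟩ := hex
  have hjspec : m j = h := Nat.findGreatest_spec (P := fun k => m k = h) hk0N hk0
  have hjN : j ≤ N := Nat.findGreatest_le _
  refine ⟨j, hjN, hjspec, ?_⟩
  have key : ∀ s k, k ≤ N → N ≤ k + s → j < k → h < m k := by
    intro s
    induction s with
    | zero =>
      intro k h1 h2 h3
      have hk : k = N := by omega
      subst hk
      have : m k ≠ h := Nat.findGreatest_is_greatest (P := fun k => m k = h) h3 h1
      omega
    | succ s ih =>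
      intro k h1 h2 h3
      rcases eq_or_lt_of_le h1 with rfl | hlt
      · have : m k ≠ h := Nat.findGreatest_is_greatest (P := fun k => m k = h) h3 h1
        omega
      · have hk1 := ih (k + 1) (by omega) (by omega) (by omega)
        have := hstep k
        have : m k ≠ h := Nat.findGreatest_is_greatest (P := fun k => m k = h) h3 h1
        omega
  intro k hk1 hk2
  exact key N k hk2 (by omega) hk1

lemma mod_div_eq (β a b : ℕ) (hβ : 1 ≤ β) (hmod : (β : ℤ) ∣ (a : ℤ) - b)
    (hdiv : a / β = b / β) : a = b := by
  obtain ⟨t, ht⟩ := hmod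
  have hd : (β : ℤ) ∣ (b : ℤ) - a := ⟨-t, by linarith⟩
  have hm : a % β = b % β := by
    have : (a : ℤ) % β = (b : ℤ) % β := Int.modEq_iff_dvd.mpr hd
    exact_mod_cast this
  calc a = β * (a / β) + a % β := (Nat.div_add_mod a β).symm
    _ = β * (b / β) + b % β := by rw [hdiv, hm]
    _ = b := Nat.div_add_mod b β

end comb

section sel

lemma select {K α β : ℕ} (hK : 2 ≤ K) (hα : 1 ≤ α) (hα' : α ≤ K^2)
    (hβ : 1 ≤ β) (hβ' : β ≤ K^2)
    {Γ : Type} [Fintype Γ] (hΓ : 4 * Fintype.card Γ ≤ K^2)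
    (P : ℕ → Γ) (m n : ℕ → ℕ) (N : ℕ)
    (hstep : ∀ k, m (k+1) ≤ m k + 1)
    (hbelt : ∀ k, k ≤ N → |(α:ℤ) * m k - (β:ℤ) * n k| ≤ ((6*K^4 : ℕ) : ℤ))
    (heff : m 0 + K^2 * (6*K^4) < m N) :
    ∃ i j, i < j ∧ j ≤ N ∧ P i = P j ∧
      ∃ Dm Dn : ℕ, m j = m i + Dm ∧ n j = n i + Dn ∧
        α * Dm = β * Dn ∧
        ∀ k, j ≤ k → k ≤ N → Dm + 1 ≤ m k ∧ Dn + 1 ≤ n k := by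
  classical
  set d := 6*K^4 with hd
  set cΓ := Fintype.card Γ with hcΓ
  set t := cΓ * (2*d/β + 1) with ht
  set W := β * t with hWdef
  set H := m N with hH
  -- numeric bounds
  have hWb : W ≤ cΓ * (2*d+β) := by
    have h1 : β * (2*d/β) ≤ 2*d := by
      rw [mul_comm]; exact Nat.div_mul_le_self _ _
    calc W = cΓ * (β*(2*d/β)) + cΓ * β := by rw [hWdef, ht]; ring
      _ ≤ cΓ * (2*d) + cΓ * β := by
          exact Nat.add_le_add_right (Nat.mul_le_mul le_rfl h1) _
      _ = cΓ * (2*d+β) := by ring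
  have h4W : 4*W ≤ K^2*(2*d+β) := by
    calc 4*W ≤ 4*(cΓ*(2*d+β)) := Nat.mul_le_mul le_rfl hWb
      _ = (4*cΓ)*(2*d+β) := by ring
      _ ≤ K^2*(2*d+β) := Nat.mul_le_mul hΓ le_rfl
  have hK2 : 4 ≤ K^2 := by nlinarith
  have hnum : W + d + β + 1 ≤ K^2 * d + 1 := by
    have e1 : K^2*(2*d+β) + 4*(d+β) ≤ 4*(K^2*d) := by
      have hb1 : K^2*β ≤ K^2*K^2 := Nat.mul_le_mul le_rfl hβ'
      have hb2 : 4*β ≤ K^2*K^2 := Nat.mul_le_mul hK2 hβ'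
      have hb3 : K^2*K^2 + K^2*K^2 ≤ 2*d := by rw [hd]; nlinarith
      have hb4 : 4*(2*d) ≤ K^2*(2*d) := Nat.mul_le_mul hK2 le_rfl
      calc K^2*(2*d+β) + 4*(d+β) = K^2*(2*d) + (K^2*β + 4*β) + 4*d := by ring
        _ ≤ K^2*(2*d) + 2*d + 4*d := by omega
        _ ≤ K^2*(2*d) + K^2*(2*d) := by omega
        _ = 4*(K^2*d) := by ring
    omega
  have hHb : W + d + β + 1 ≤ H := by omega
  have hm0 : m 0 + W < H := by
    have : W ≤ K^2*d := by omega
    omega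
  -- last occurrence indices
  have hlo : ∀ s : ℕ, ∃ js, s ≤ t →
      js ≤ N ∧ m js = H - β*s ∧ ∀ k, js < k → k ≤ N → H - β*s < m k := by
    intro s
    by_cases hs : s ≤ t
    · have hβs : β*s ≤ W := by rw [hWdef]; exact Nat.mul_le_mul le_rfl hs
      have h1 : m 0 ≤ H - β*s := by omega
      have h2 : H - β*s ≤ m N := by omega
      obtain ⟨k, _, hkN, hk⟩ := nat_ivt m hstep (Nat.zero_le N) h1 h2
      obtain ⟨j', hj⟩ := last_occ m hstep ⟨k, hkN, hk⟩ h2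
      exact ⟨j', fun _ => hj⟩
    · exact ⟨0, fun h => absurd h hs⟩
  choose J hJ using hlo
  -- pigeonhole
  set φ : ℕ → Γ × ℕ := fun s =>
    (P (J s), ((α:ℤ) * ((H - β*s : ℕ) : ℤ) - (β:ℤ) * n (J s) + d).toNat / β) with hφdef
  have himg : ∀ s ∈ Finset.range (t+1),
      φ s ∈ (Finset.univ : Finset Γ) ×ˢ Finset.range (2*d/β + 1) := by
    intro s hs
    simp only [Finset.mem_range] at hs
    have hs' : s ≤ t := by omega
    obtain ⟨hJN, hJm, _⟩ := hJ s hs'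
    have hb := hbelt (J s) hJN
    rw [hJm, abs_le] at hb
    have h2d : ((α:ℤ) * ((H - β*s : ℕ) : ℤ) - (β:ℤ) * n (J s) + d).toNat ≤ 2*d := by
      omega
    simp only [hφdef, Finset.mem_product, Finset.mem_univ, Finset.mem_range, true_and]
    exact Nat.lt_succ_of_le (Nat.div_le_div_right h2d)
  have hcard : ((Finset.univ : Finset Γ) ×ˢ Finset.range (2*d/β + 1)).card
      < (Finset.range (t+1)).card := by
    simp [Finset.card_product, ht]; omega
  obtain ⟨s1, hs1, s2, hs2, hne, hφeq⟩ :=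
    Finset.exists_ne_map_eq_of_card_lt_of_maps_to hcard himg
  simp only [Finset.mem_range] at hs1 hs2
  obtain ⟨s, s', hss, hst, hs't, hφe⟩ :
      ∃ s s', s' < s ∧ s ≤ t ∧ s' ≤ t ∧ φ s = φ s' := by
    rcases lt_or_gt_of_ne hne with h | h
    · exact ⟨s2, s1, h, by omega, by omega, hφeq.symm⟩
    · exact ⟨s1, s2, h, by omega, by omega, hφeq⟩
  obtain ⟨hJN, hJm, hJgt⟩ := hJ s hst
  obtain ⟨hJ'N, hJ'm, hJ'gt⟩ := hJ s' hs't
  set i := J s with hi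
  set j := J s' with hj
  have hβs : β*s ≤ W := by rw [hWdef]; exact Nat.mul_le_mul le_rfl hst
  have hβs' : β*s' ≤ W := by rw [hWdef]; exact Nat.mul_le_mul le_rfl hs't
  have hβss' : β*s' < β*s := by
    have := Nat.mul_le_mul_left β hss
    have h2 : β*(s'+1) = β*s' + β := by ring
    have h3 : β*(s'+1) ≤ β*s := Nat.mul_le_mul le_rfl hss
    omega
  have hij : i < j := by
    rcases lt_trichotomy i j with h | h | h
    · exact h
    · exfalso
      rw [h, hJ'm] at hJm
      omega
    · exfalso
      have := hJ'gt i h hJN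
      omega
  refine ⟨i, j, hij, hJ'N, congrArg Prod.fst hφe, ?_⟩
  -- extract the w-equality
  set a : ℤ := (α:ℤ) * ((H - β*s : ℕ) : ℤ) - (β:ℤ) * n i + d with ha
  set b : ℤ := (α:ℤ) * ((H - β*s' : ℕ) : ℤ) - (β:ℤ) * n j + d with hb
  have hbi := hbelt i hJN; rw [hJm, abs_le] at hbi
  have hbj := hbelt j hJ'N; rw [hJ'm, abs_le] at hbj
  have h0a : 0 ≤ a := by rw [ha]; omega
  have h0b : 0 ≤ b := by rw [hb]; omega
  have hcasts : ((H - β*s : ℕ) : ℤ) = (H : ℤ) - (β:ℤ)*s := by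
    push_cast [Nat.cast_sub (by omega : β*s ≤ H)]; ring
  have hcasts' : ((H - β*s' : ℕ) : ℤ) = (H : ℤ) - (β:ℤ)*s' := by
    push_cast [Nat.cast_sub (by omega : β*s' ≤ H)]; ring
  have hmod : (β : ℤ) ∣ (a.toNat : ℤ) - (b.toNat : ℤ) := by
    rw [Int.toNat_of_nonneg h0a, Int.toNat_of_nonneg h0b, ha, hb, hcasts, hcasts']
    exact ⟨(α:ℤ)*((s':ℤ) - s) - n i + n j, by ring⟩
  have hdiveq : a.toNat / β = b.toNat / β := by
    have := congrArg Prod.snd hφe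
    simpa [hφdef, ha, hb, hi, hj] using this
  have htn := mod_div_eq β a.toNat b.toNat hβ hmod hdiveq
  have haeqb : a = b := by
    rw [← Int.toNat_of_nonneg h0a, ← Int.toNat_of_nonneg h0b, htn]
  -- define Dm, Dn
  refine ⟨β*(s-s'), α*(s-s'), ?_, ?_, by ring, ?_⟩
  · -- m j = m i + Dm
    have hsplit : β * s = β * s' + β * (s - s') := by
      rw [← Nat.mul_add]; congr 1; omega
    omega
  · -- n j = n i + Dn
    have hcZ : (β:ℤ) * (n j : ℤ) = (β:ℤ) * ((n i : ℤ) + (α:ℤ)*((s:ℤ)-(s':ℤ))) := by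
      rw [ha, hb, hcasts, hcasts'] at haeqb
      linear_combination haeqb
    have h2 : (n j : ℤ) = (n i : ℤ) + (α:ℤ)*((s:ℤ)-(s':ℤ)) :=
      mul_left_cancel₀ (by positivity) hcZ
    have : (n j : ℤ) = (n i : ℤ) + ((α*(s-s') : ℕ) : ℤ) := by
      rw [h2]; push_cast [Nat.cast_sub (le_of_lt hss)]; ring
    exact_mod_cast this
  · -- positivity along [j, N]
    intro k hk1 hk2
    have hsplit : β * s = β * s' + β * (s - s') := by
      rw [← Nat.mul_add]; congr 1; omega
    have hmk : H - β*s' ≤ m k := by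
      rcases eq_or_lt_of_le hk1 with rfl | h
      · omega
      · exact le_of_lt (hJ'gt k h hk2)
    constructor
    · omega
    · -- Dn + 1 ≤ n k
      have hbk := hbelt k hk2
      rw [abs_le] at hbk
      have hc1 : (α:ℤ) * (m k : ℤ) - (β:ℤ) * (n k : ℤ) ≤ (d : ℤ) := hbk.2
      have hc2 : ((H - β*s' : ℕ) : ℤ) ≤ (m k : ℤ) := by exact_mod_cast hmk
      have hc3 : (α:ℤ) * ((H - β*s' : ℕ) : ℤ) ≤ (α:ℤ) * (m k : ℤ) :=
        mul_le_mul_of_nonneg_left hc2 (by positivity)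
      have hc4 : ((H - β*s' : ℕ) : ℤ) = ((H - β*s : ℕ) : ℤ) + ((β*(s-s') : ℕ) : ℤ) := by
        rw [hcasts, hcasts']
        push_cast [Nat.cast_sub (le_of_lt hss)]
        ring
      have hc5 : ((d : ℕ) : ℤ) + β + 1 ≤ ((H - β*s : ℕ) : ℤ) := by
        rw [hcasts]
        push_cast
        omega
      have hc6 : ((H - β*s : ℕ) : ℤ) ≤ (α:ℤ) * ((H - β*s : ℕ) : ℤ) :=
        le_mul_of_one_le_left (by positivity) (by exact_mod_cast hα)
      have hc7 : (α:ℤ) * ((β*(s-s') : ℕ) : ℤ) = (β:ℤ) * ((α*(s-s') : ℕ) : ℤ) := by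
        push_cast; ring
      have hc4' : (α:ℤ) * ((H - β*s' : ℕ) : ℤ)
          = (α:ℤ) * ((H - β*s : ℕ) : ℤ) + (α:ℤ) * ((β*(s-s') : ℕ) : ℤ) := by
        rw [hc4]; ring
      have hfin : (β:ℤ) * (((α*(s-s') : ℕ) : ℤ) + 1) ≤ (β:ℤ) * (n k : ℤ) := by
        have hβ1 : (1:ℤ) ≤ (β:ℤ) := by exact_mod_cast hβ
        have hαD : (α:ℤ) * ((β*(s-s') : ℕ) : ℤ) = (β:ℤ) * ((α*(s-s') : ℕ) : ℤ) := hc7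
        linarith [hc1, hc3, hc4', hc5, hc6]
      have : ((α*(s-s') : ℕ) : ℤ) + 1 ≤ (n k : ℤ) :=
        le_of_mul_le_mul_left hfin (by positivity)
      exact_mod_cast this
end sel

/-- cut lemma: if the run `T(c)` stays inside a belt of slope
`α/β` (co-prime `α, β ∈ [1,K²]`, thickness `6K⁴`) and the total counter effect
of `T` on the first (or second) component exceeds `K²·6K⁴`, then there are
`i < j` with `T_{1…i}(c)` and `T_{1…j}(c)` `(α/β)`-related such that cutting
out `T_{i+1…j}` yields a run inside the same belt. -/

theorem cut_lemma {A S : Type} [Field S]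
    (A₁ A₂ : DWROCA A S) (K : ℕ)
    (hK : K = Fintype.card A₁.Q + Fintype.card A₂.Q)
    (α β : ℕ) (hα : 1 ≤ α) (hα' : α ≤ K ^ 2) (hβ : 1 ≤ β) (hβ' : β ≤ K ^ 2)
    (hcop : Nat.Coprime α β)
    (c : A₁.Cfg × A₂.Cfg) (T : List A)
    (hbelt : ∀ i ≤ T.length, inBelt α β (6 * K ^ 4) (runPair A₁ A₂ c (T.take i)))
    (hce : ((runPair A₁ A₂ c T).1.2.1 : ℤ) - (c.1.2.1 : ℤ) > (K ^ 2 * (6 * K ^ 4) : ℤ) ∨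
           ((runPair A₁ A₂ c T).2.2.1 : ℤ) - (c.2.2.1 : ℤ) > (K ^ 2 * (6 * K ^ 4) : ℤ)) :
    ∃ i j : ℕ, i < j ∧ j ≤ T.length ∧
      abRelated α β (runPair A₁ A₂ c (T.take i)) (runPair A₁ A₂ c (T.take j)) ∧
      ∀ r ≤ (T.take i ++ T.drop j).length,
        inBelt α β (6 * K ^ 4) (runPair A₁ A₂ c ((T.take i ++ T.drop j).take r)) := by
  classical
  have hK2 : 2 ≤ K := by
    have h1 : 0 < Fintype.card A₁.Q := Fintype.card_pos_iff.mpr ⟨A₁.q0⟩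
    have h2 : 0 < Fintype.card A₂.Q := Fintype.card_pos_iff.mpr ⟨A₂.q0⟩
    omega
  set N := T.length with hN
  set mf : ℕ → ℕ := fun k => (runPair A₁ A₂ c (T.take k)).1.2.1 with hmf
  set nf : ℕ → ℕ := fun k => (runPair A₁ A₂ c (T.take k)).2.2.1 with hnf
  set Pf : ℕ → A₁.Q × A₂.Q :=
    fun k => ((runPair A₁ A₂ c (T.take k)).1.1, (runPair A₁ A₂ c (T.take k)).2.1) with hPf
  have hstep : ∀ k, (mf (k+1) ≤ mf k + 1 ∧ mf k ≤ mf (k+1) + 1) ∧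
      (nf (k+1) ≤ nf k + 1 ∧ nf k ≤ nf (k+1) + 1) := by
    intro k
    rcases le_or_gt T.length k with hk | hk
    · have hTk : T.take (k+1) = T.take k := by
        rw [List.take_of_length_le hk, List.take_of_length_le (by omega)]
      simp only [hmf, hnf, hTk]
      omega
    · have hTk : T.take (k+1) = T.take k ++ [T[k]] := by
        rw [List.take_succ, List.getElem?_eq_getElem hk]; rfl
      have h1 := step_cnt_bound A₁ (runPair A₁ A₂ c (T.take k)).1 T[k]
      have h2 := step_cnt_bound A₂ (runPair A₁ A₂ c (T.take k)).2 T[k]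
      simp only [hmf, hnf, hTk, runPair_concat]
      exact ⟨⟨h1.1, h1.2⟩, ⟨h2.1, h2.2⟩⟩
  have hΓcard : 4 * Fintype.card (A₁.Q × A₂.Q) ≤ K ^ 2 := by
    rw [Fintype.card_prod, hK]
    zify
    nlinarith [sq_nonneg ((Fintype.card A₁.Q : ℤ) - (Fintype.card A₂.Q : ℤ))]
  have hbelt' : ∀ k, k ≤ N → |(α:ℤ) * mf k - (β:ℤ) * nf k| ≤ ((6*K^4 : ℕ) : ℤ) := by
    intro k hk
    have := hbelt k hk
    unfold inBelt at this
    simpa [hmf, hnf] using this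
  have hbelt'' : ∀ k, k ≤ N → |(β:ℤ) * nf k - (α:ℤ) * mf k| ≤ ((6*K^4 : ℕ) : ℤ) := by
    intro k hk
    rw [abs_sub_comm]
    exact hbelt' k hk
  have hm0 : mf 0 = c.1.2.1 := rfl
  have hn0 : nf 0 = c.2.2.1 := rfl
  have hmN : mf N = (runPair A₁ A₂ c T).1.2.1 := by
    simp [hmf, hN, List.take_of_length_le (le_refl T.length)]
  have hnN : nf N = (runPair A₁ A₂ c T).2.2.1 := by
    simp [hnf, hN, List.take_of_length_le (le_refl T.length)]
  have hcast : ((K^2 * (6*K^4) : ℕ) : ℤ) = (K ^ 2 * (6 * K ^ 4) : ℤ) := by push_cast; ring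
  have hmfk : ∀ k, mf k = (runPair A₁ A₂ c (T.take k)).1.2.1 := fun _ => rfl
  have hnfk : ∀ k, nf k = (runPair A₁ A₂ c (T.take k)).2.2.1 := fun _ => rfl
  have hPfk : ∀ k, Pf k =
      ((runPair A₁ A₂ c (T.take k)).1.1, (runPair A₁ A₂ c (T.take k)).2.1) := fun _ => rfl
  rcases hce with hce | hce
  · -- first counter has large effect
    have heff' : mf 0 + K^2 * (6*K^4) < mf N := by
      rw [hm0, hmN]
      rw [← hcast] at hce
      omega
    obtain ⟨i, j, hij, hjN, hPeq, Dm, Dn, hDm, hDn, habD, hpos⟩ :=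
      select hK2 hα hα' hβ hβ' hΓcard Pf mf nf N (fun k => (hstep k).1.1) hbelt' heff'
    rw [hPfk i, hPfk j, Prod.mk.injEq] at hPeq
    have hcr := cut_run A₁ A₂ α β c T (6*K^4) hbelt i j hij hjN
      hPeq.1 hPeq.2
      Dm Dn (by rw [← hmfk i, ← hmfk j]; omega) (by rw [← hnfk i, ← hnfk j]; omega) habD
      (fun k h1 h2 => by rw [← hmfk k]; exact (hpos k h1 h2).1)
      (fun k h1 h2 => by rw [← hnfk k]; exact (hpos k h1 h2).2)
    exact ⟨i, j, hij, hjN, hcr.1, hcr.2⟩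
  · -- second counter has large effect
    have heff' : nf 0 + K^2 * (6*K^4) < nf N := by
      rw [hn0, hnN]
      rw [← hcast] at hce
      omega
    obtain ⟨i, j, hij, hjN, hPeq, Dn, Dm, hDn, hDm, habD, hpos⟩ :=
      select hK2 hβ hβ' hα hα' hΓcard Pf nf mf N (fun k => (hstep k).2.1) hbelt'' heff'
    rw [hPfk i, hPfk j, Prod.mk.injEq] at hPeq
    have hcr := cut_run A₁ A₂ α β c T (6*K^4) hbelt i j hij hjN
      hPeq.1 hPeq.2
      Dm Dn (by rw [← hmfk i, ← hmfk j]; omega) (by rw [← hnfk i, ← hnfk j]; omega) habD.symm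
      (fun k h1 h2 => by rw [← hmfk k]; exact (hpos k h1 h2).2)
      (fun k h1 h2 => by rw [← hnfk k]; exact (hpos k h1 h2).1)
    exact ⟨i, j, hij, hjN, hcr.1, hcr.2⟩
end
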